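/- Let α ∈ [1,2]. There exists a continuous function f : [0,1] → [0,∞) with f(δ) → 0 as δ → 0⁺ such that for every δ ∈ (0,1) and all ζ₁ = (ξ₁,μ₁), ζ₂ = (ξ₂,μ₂) ∈ A_δ satisfying ξ₁ξ₂ < 0 and μ₁μ₂ < 0, one has h(ζ₁+ζ₂) ≤ |h(ζ₁) − h(ζ₂)| + f(δ) · max(h(ζ₁), h(ζ₂)). -/

import Mathlib

/-
Put a = |ξ₁|^α and b = |ξ₂|^α. Since the coordinates of ζ₁ and ζ₂ have opposite signs,
superadditivity of t ↦ t^α on [0, ∞) (α ≥ 1) gives |ξ₁ + ξ₂|^α ≤ |a - b|, and likewise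
(μ₁ + μ₂)² ≤ |μ₁² - μ₂²|. On A_δ we have μᵢ² = B aᵢ up to δ aᵢ, so μ₁² - μ₂² has the sign of
a - b up to an error δ (a + b): the two differences reinforce each other in h(ζ₁) - h(ζ₂), with a
loss of 2δ (a + b) ≤ 2δ max (h(ζ₁), h(ζ₂)). Hence f(δ) = 2δ works.
-/

open Set

noncomputable section

def hBOZK (α : ℝ) (ζ : ℝ × ℝ) : ℝ := (α + 1) * |ζ.1| ^ α + ζ.2 ^ 2

/-- `A_δ = {(ξ,μ) : (B-δ)|ξ|^α ≤ μ² ≤ (B+δ)|ξ|^α}` with `B = α(α+1)/2`. -/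
def ASet (α δ : ℝ) : Set (ℝ × ℝ) :=
  {ζ | (α * (α + 1) / 2 - δ) * |ζ.1| ^ α ≤ ζ.2 ^ 2 ∧
       ζ.2 ^ 2 ≤ (α * (α + 1) / 2 + δ) * |ζ.1| ^ α}

open Real

lemma abs_add_eq_abs_sub_abs_of_mul_nonpos {x y : ℝ} (hxy : x * y ≤ 0) (h : |y| ≤ |x|) :
    |x + y| = |x| - |y| := by
  rw [← abs_of_nonneg (sub_nonneg.2 h), ← sq_eq_sq_iff_abs_eq_abs]
  have hprod : |x| * |y| = -(x * y) := by rw [← abs_mul, abs_of_nonpos hxy]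
  linear_combination -sq_abs x - sq_abs y + 2 * hprod

lemma abs_add_rpow_le_abs_rpow_sub_rpow {x y p : ℝ} (hp : 1 ≤ p) (hxy : x * y ≤ 0) :
    |x + y| ^ p ≤ |(|x| ^ p - |y| ^ p)| := by
  wlog h : |y| ≤ |x| generalizing x y
  · rw [add_comm, abs_sub_comm]
    exact this (by rwa [mul_comm]) (le_of_not_ge h)
  have hsup := add_rpow_le_rpow_add (abs_nonneg (x + y)) (abs_nonneg y) hp
  rw [abs_add_eq_abs_sub_abs_of_mul_nonpos hxy h] at hsup ⊢
  rw [sub_add_cancel] at hsup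
  exact (le_sub_iff_add_le.2 hsup).trans (le_abs_self _)

lemma add_sq_le_abs_sq_sub_sq {x y : ℝ} (hxy : x * y ≤ 0) : (x + y) ^ 2 ≤ |x ^ 2 - y ^ 2| := by
  simpa [rpow_two, sq_abs] using abs_add_rpow_le_abs_rpow_sub_rpow one_le_two hxy

lemma mul_abs_sub_add_abs_sub_le {c B δ a b m n : ℝ} (hc : 0 ≤ c) (hB : 0 ≤ B)
    (hm : |m - B * a| ≤ δ * a) (hn : |n - B * b| ≤ δ * b) :
    c * |a - b| + |m - n| ≤ |c * (a - b) + (m - n)| + 2 * δ * (a + b) := by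
  obtain ⟨e, hmn⟩ : ∃ e, m - n = B * (a - b) + e := ⟨m - n - B * (a - b), by ring⟩
  have he : |e| ≤ δ * (a + b) := by
    calc |e| = |(m - B * a) - (n - B * b)| := by congr 1; linarith
      _ ≤ |m - B * a| + |n - B * b| := abs_sub _ _
      _ ≤ δ * (a + b) := by linarith
  have hmn_le : |m - n| ≤ B * |a - b| + |e| := by
    rw [hmn]
    exact (abs_add_le _ _).trans_eq (by rw [abs_mul, abs_of_nonneg hB])
  have hsum_ge : (c + B) * |a - b| - |e| ≤ |c * (a - b) + (m - n)| :=
    calc (c + B) * |a - b| - |e| = |(c + B) * (a - b)| - |-e| := by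
          rw [abs_mul, abs_of_nonneg (add_nonneg hc hB), abs_neg]
      _ ≤ |(c + B) * (a - b) - -e| := abs_sub_abs_le_abs_sub _ _
      _ = |c * (a - b) + (m - n)| := by rw [hmn]; ring_nf
  linarith

lemma abs_sq_sub_le_of_mem_ASet {α δ : ℝ} {ζ : ℝ × ℝ} (h : ζ ∈ ASet α δ) :
    |ζ.2 ^ 2 - α * (α + 1) / 2 * |ζ.1| ^ α| ≤ δ * |ζ.1| ^ α := by
  obtain ⟨hl, hr⟩ := h
  rw [abs_sub_le_iff]
  constructor <;> linarith

lemma hBOZK_add_le {α δ : ℝ} (hα : 1 ≤ α) (hδ : 0 ≤ δ) {ζ₁ ζ₂ : ℝ × ℝ}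
    (h₁ : ζ₁ ∈ ASet α δ) (h₂ : ζ₂ ∈ ASet α δ) (hξ : ζ₁.1 * ζ₂.1 ≤ 0) (hμ : ζ₁.2 * ζ₂.2 ≤ 0) :
    hBOZK α (ζ₁ + ζ₂) ≤ |hBOZK α ζ₁ - hBOZK α ζ₂| + 2 * δ * max (hBOZK α ζ₁) (hBOZK α ζ₂) := by
  set a := |ζ₁.1| ^ α
  set b := |ζ₂.1| ^ α
  have ha : 2 * a ≤ hBOZK α ζ₁ := by
    have : 0 ≤ a := by positivity
    unfold hBOZK; nlinarith [sq_nonneg ζ₁.2]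
  have hb : 2 * b ≤ hBOZK α ζ₂ := by
    have : 0 ≤ b := by positivity
    unfold hBOZK; nlinarith [sq_nonneg ζ₂.2]
  have hdiff : hBOZK α ζ₁ - hBOZK α ζ₂ = (α + 1) * (a - b) + (ζ₁.2 ^ 2 - ζ₂.2 ^ 2) := by
    unfold hBOZK; ring
  calc hBOZK α (ζ₁ + ζ₂) ≤ (α + 1) * |a - b| + |ζ₁.2 ^ 2 - ζ₂.2 ^ 2| := by
        unfold hBOZK
        gcongr
        · exact abs_add_rpow_le_abs_rpow_sub_rpow hα hξ
        · exact add_sq_le_abs_sq_sub_sq hμ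
    _ ≤ |(α + 1) * (a - b) + (ζ₁.2 ^ 2 - ζ₂.2 ^ 2)| + 2 * δ * (a + b) :=
        mul_abs_sub_add_abs_sub_le (by linarith) (by positivity)
          (abs_sq_sub_le_of_mem_ASet h₁) (abs_sq_sub_le_of_mem_ASet h₂)
    _ ≤ |hBOZK α ζ₁ - hBOZK α ζ₂| + 2 * δ * max (hBOZK α ζ₁) (hBOZK α ζ₂) := by
        rw [hdiff]
        gcongr
        linarith [le_max_left (hBOZK α ζ₁) (hBOZK α ζ₂),
          le_max_right (hBOZK α ζ₁) (hBOZK α ζ₂)]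

theorem stmt12 (α : ℝ) (hα : α ∈ Icc (1:ℝ) 2) :
    ∃ f : ℝ → ℝ, ContinuousOn f (Icc 0 1) ∧ (∀ δ ∈ Icc (0:ℝ) 1, 0 ≤ f δ) ∧
      Filter.Tendsto f (nhdsWithin 0 (Ioi 0)) (nhds 0) ∧
      ∀ δ ∈ Ioo (0:ℝ) 1, ∀ ζ₁ ζ₂ : ℝ × ℝ, ζ₁ ∈ ASet α δ → ζ₂ ∈ ASet α δ →
        ζ₁.1 * ζ₂.1 < 0 → ζ₁.2 * ζ₂.2 < 0 →
        hBOZK α (ζ₁ + ζ₂) ≤ |hBOZK α ζ₁ - hBOZK α ζ₂|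
          + f δ * max (hBOZK α ζ₁) (hBOZK α ζ₂) := by
  refine ⟨fun δ => 2 * δ, by fun_prop, fun δ hδ => by linarith [hδ.1], ?_, ?_⟩
  · exact tendsto_nhdsWithin_of_tendsto_nhds
      (by simpa using (continuous_const_mul (2:ℝ)).tendsto 0)
  · intro δ hδ ζ₁ ζ₂ h₁ h₂ hξ hμ
    exact hBOZK_add_le hα.1 hδ.1.le h₁ h₂ hξ.le hμ.le
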